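/- arXiv:1108.4531 — 3 statements merged into one kernel-verified Lean document; each statement's English description precedes it below -/
import Mathlib

section
/- Let Q be an n×n nonnegative real matrix (n ≥ 1) and let q₀ ∈ ℝⁿ be a vector all of whose entries are strictly positive. For t ≥ 0 set q_t = (Qᵀ)^t q₀. Then the limit as t → ∞ of (‖q_t‖₁ / ‖q₀‖₁)^(1/t) exists and equals the spectral radius ρ(Q). (In the paper this says that the average rate of convergence to the optimal set of a randomly initialized absorbing evolutionary algorithm with transient transition submatrix Q equals 1 − ρ(Q).) -/
open Matrix

/-- The spectral radius of a real square matrix: the maximum of the moduli of its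
complex eigenvalues (`0` for an empty matrix, via `sSup ∅ = 0`). -/
noncomputable def specRad {n : Type*} [Fintype n] [DecidableEq n] (A : Matrix n n ℝ) : ℝ :=
  sSup ((fun z => ‖z‖) '' spectrum ℂ (A.map Complex.ofReal))

/-!
For nonnegative `Q` and positive `q₀`, `‖q_t‖₁ = q₀ ⬝ᵥ (Q ^ t *ᵥ 1)` is a positive combination
of the row sums of `Q ^ t`. Measuring matrices in the `ℓ∞` operator norm (the largest row sum
of absolute values), it therefore lies between `(min q₀) ‖Q ^ t‖` and `‖q₀‖₁ ‖Q ^ t‖`.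
Constant factors disappear under `(·) ^ (1 / t)`, and Gelfand's formula
`‖Q ^ t‖ ^ (1 / t) → ρ(Q)` concludes.
-/

open Filter Topology

theorem tendsto_rpow_one_div_of_le_mul_of_le_mul {x y : ℕ → ℝ} {a b L : ℝ} (ha : 0 < a)
    (hb : 0 < b) (hx : ∀ t, 0 ≤ x t) (hax : ∀ t, a * x t ≤ y t) (hbx : ∀ t, y t ≤ b * x t)
    (h : Tendsto (fun t : ℕ => x t ^ (1 / t : ℝ)) atTop (𝓝 L)) :
    Tendsto (fun t : ℕ => y t ^ (1 / t : ℝ)) atTop (𝓝 L) := by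
  have htendsto_mul {c : ℝ} (hc : 0 < c) :
      Tendsto (fun t : ℕ => (c * x t) ^ (1 / t : ℝ)) atTop (𝓝 L) := by
    have hc_root : Tendsto (fun t : ℕ => c ^ (1 / t : ℝ)) atTop (𝓝 1) := by
      simpa [Function.comp_def] using ((Real.continuousAt_const_rpow hc.ne').tendsto.comp
        tendsto_one_div_atTop_nhds_zero_nat)
    simpa [Real.mul_rpow hc.le (hx _)] using hc_root.mul h
  refine tendsto_of_tendsto_of_tendsto_of_le_of_le (htendsto_mul ha) (htendsto_mul hb)
    (fun t => ?_) (fun t => ?_)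
  · exact Real.rpow_le_rpow (mul_nonneg ha.le (hx t)) (hax t) (by positivity)
  · exact Real.rpow_le_rpow ((mul_nonneg ha.le (hx t)).trans (hax t)) (hbx t) (by positivity)

namespace spectrum

variable {A : Type*} [NormedRing A] [NormedAlgebra ℂ A] [CompleteSpace A]

theorem sSup_norm_image_eq_toReal_spectralRadius [Nontrivial A] (a : A) :
    sSup (norm '' spectrum ℂ a) = (spectralRadius ℂ a).toReal := by
  obtain ⟨k, hk, hkr⟩ := exists_nnnorm_eq_spectralRadius a
  rw [← hkr]
  refine IsGreatest.csSup_eq ⟨⟨k, hk, rfl⟩, ?_⟩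
  rintro _ ⟨z, hz, rfl⟩
  have : (‖z‖₊ : ENNReal) ≤ ‖k‖₊ := hkr ▸ le_iSup₂ (α := ENNReal) z hz
  exact_mod_cast this

theorem tendsto_norm_pow_rpow_one_div_toReal_spectralRadius [NormOneClass A] (a : A) :
    Tendsto (fun t : ℕ => ‖a ^ t‖ ^ (1 / t : ℝ)) atTop (𝓝 (spectralRadius ℂ a).toReal) := by
  have hfinite : spectralRadius ℂ a ≠ ⊤ :=
    ((spectralRadius_le_nnnorm a).trans_lt ENNReal.coe_lt_top).ne
  refine ((ENNReal.tendsto_toReal hfinite).comp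
    (pow_norm_pow_one_div_tendsto_nhds_spectralRadius a)).congr fun t => ?_
  simp [ENNReal.toReal_ofReal, Real.rpow_nonneg (norm_nonneg _)]

end spectrum

section LinftyOpNorm

attribute [local instance] Matrix.linftyOpSeminormedAddCommGroup Matrix.linftyOpNormedRing
  Matrix.linftyOpNormedAlgebra

namespace Matrix

variable {m n α : Type*} [Fintype m] [Fintype n]

theorem sum_norm_row_le_linfty_opNorm [SeminormedAddCommGroup α] (B : Matrix m n α) (i : m) :
    ∑ j, ‖B i j‖ ≤ ‖B‖ := by
  have h := Finset.le_sup (f := fun i => ∑ j, ‖B i j‖₊) (Finset.mem_univ i)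
  rw [linfty_opNorm_def]
  simpa using NNReal.coe_le_coe.mpr h

theorem exists_linfty_opNorm_eq_sum_norm_row [SeminormedAddCommGroup α] [Nonempty m]
    (B : Matrix m n α) : ∃ i, ‖B‖ = ∑ j, ‖B i j‖ := by
  obtain ⟨i, -, hi⟩ := Finset.exists_mem_eq_sup Finset.univ Finset.univ_nonempty
    fun i => ∑ j, ‖B i j‖₊
  exact ⟨i, by rw [linfty_opNorm_def, hi]; push_cast; rfl⟩

theorem linfty_opNorm_map_ofReal (B : Matrix m n ℝ) : ‖B.map Complex.ofReal‖ = ‖B‖ := by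
  simp [linfty_opNorm_def]

theorem sum_abs_transpose_mulVec {B : Matrix m n ℝ} (hB : ∀ i j, 0 ≤ B i j) {q : m → ℝ}
    (hq : ∀ i, 0 ≤ q i) : ∑ j, |(Bᵀ *ᵥ q) j| = q ⬝ᵥ (B *ᵥ 1) := by
  have hnonneg (j : n) : 0 ≤ (q ᵥ* B) j :=
    Finset.sum_nonneg fun i _ => mul_nonneg (hq i) (hB i j)
  simp_rw [mulVec_transpose, abs_of_nonneg (hnonneg _)]
  rw [← dotProduct_one, dotProduct_mulVec]

theorem dotProduct_mulVec_one_le (B : Matrix m n ℝ) {q : m → ℝ} (hq : ∀ i, 0 ≤ q i) :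
    q ⬝ᵥ (B *ᵥ 1) ≤ (∑ i, q i) * ‖B‖ := by
  rw [Finset.sum_mul]
  refine Finset.sum_le_sum fun i _ => mul_le_mul_of_nonneg_left ?_ (hq i)
  calc (B *ᵥ 1) i = ∑ j, B i j := by simp [mulVec, dotProduct]
    _ ≤ ∑ j, ‖B i j‖ := Finset.sum_le_sum fun j _ => Real.le_norm_self _
    _ ≤ ‖B‖ := sum_norm_row_le_linfty_opNorm B i

theorem mul_linfty_opNorm_le_dotProduct_mulVec_one [Nonempty m] {B : Matrix m n ℝ}
    (hB : ∀ i j, 0 ≤ B i j) {q : m → ℝ} {c : ℝ} (hc : 0 ≤ c) (hq : ∀ i, c ≤ q i) :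
    c * ‖B‖ ≤ q ⬝ᵥ (B *ᵥ 1) := by
  obtain ⟨i, hi⟩ := exists_linfty_opNorm_eq_sum_norm_row B
  have hrow (k : m) : (B *ᵥ 1) k = ∑ j, ‖B k j‖ := by
    simp [mulVec, dotProduct, Real.norm_of_nonneg (hB k _)]
  calc c * ‖B‖ ≤ q i * (B *ᵥ 1) i := by
        rw [hi, hrow]
        exact mul_le_mul_of_nonneg_right (hq i) (by positivity)
    _ ≤ q ⬝ᵥ (B *ᵥ 1) := Finset.single_le_sum (f := fun k => q k * (B *ᵥ 1) k)
        (fun k _ => mul_nonneg (hc.trans (hq k)) (by rw [hrow]; positivity)) (Finset.mem_univ i)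

theorem tendsto_linfty_opNorm_pow_rpow_one_div_specRad [DecidableEq n] [Nonempty n]
    (B : Matrix n n ℝ) :
    Tendsto (fun t : ℕ => ‖B ^ t‖ ^ (1 / t : ℝ)) atTop (𝓝 (specRad B)) := by
  rw [specRad, spectrum.sSup_norm_image_eq_toReal_spectralRadius]
  refine (spectrum.tendsto_norm_pow_rpow_one_div_toReal_spectralRadius _).congr fun t => ?_
  rw [← linfty_opNorm_map_ofReal]
  congr 2
  exact (map_pow Complex.ofRealHom.mapMatrix B t).symm

end Matrix

/-- for a nonnegative `n × n` matrix `Q` (`n ≥ 1`) and a strictly positive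
initial vector `q₀`, with `q_t = (Qᵀ)^t q₀`, the quantity `(‖q_t‖₁ / ‖q₀‖₁)^(1/t)`
converges to the spectral radius `ρ(Q)` as `t → ∞`. -/
theorem stmt_0 (n : ℕ) (hn : 1 ≤ n) (Q : Matrix (Fin n) (Fin n) ℝ)
    (hQ : ∀ i j, 0 ≤ Q i j) (q₀ : Fin n → ℝ) (hq₀ : ∀ i, 0 < q₀ i) :
    Filter.Tendsto
      (fun t : ℕ =>
        ((∑ i, |((Qᵀ ^ t) *ᵥ q₀) i|) / (∑ i, |q₀ i|)) ^ ((1 : ℝ) / t))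
      Filter.atTop (nhds (specRad Q)) := by
  have : Nonempty (Fin n) := ⟨⟨0, hn⟩⟩
  obtain ⟨i₀, -, hi₀⟩ := Finset.exists_min_image Finset.univ q₀ Finset.univ_nonempty
  have hmass (t : ℕ) : ∑ i, |((Qᵀ ^ t) *ᵥ q₀) i| = q₀ ⬝ᵥ (Q ^ t *ᵥ 1) := by
    rw [← transpose_pow]
    exact sum_abs_transpose_mulVec (pow_apply_nonneg hQ t) fun i => (hq₀ i).le
  have hmass₀ : ∑ i, |q₀ i| = ∑ i, q₀ i := Finset.sum_congr rfl fun i _ => abs_of_pos (hq₀ i)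
  have hmass₀_pos : 0 < ∑ i, |q₀ i| :=
    Finset.sum_pos (fun i _ => abs_pos.mpr (hq₀ i).ne') Finset.univ_nonempty
  refine tendsto_rpow_one_div_of_le_mul_of_le_mul (div_pos (hq₀ i₀) hmass₀_pos) one_pos
    (fun t => norm_nonneg (Q ^ t)) (fun t => ?_) (fun t => ?_)
    (tendsto_linfty_opNorm_pow_rpow_one_div_specRad Q)
  · rw [hmass, div_mul_eq_mul_div, div_le_div_iff_of_pos_right hmass₀_pos]
    exact mul_linfty_opNorm_le_dotProduct_mulVec_one (pow_apply_nonneg hQ t) (hq₀ i₀).le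
      fun i => hi₀ i (Finset.mem_univ i)
  · rw [hmass, one_mul, div_le_iff₀ hmass₀_pos, mul_comm, hmass₀]
    exact dotProduct_mulVec_one_le _ fun i => (hq₀ i).le

end LinftyOpNorm
end

section
/- Consider the (1+1) elitist EA and a (μ+μ) elitist EA with μ ≥ 2 using the same global mutation operator M on the same fitness function f, as in the model below. Assume S_non is nonempty, the mutation operator M is global, the selection operator P_S is elitist, and P¹(x,x) > 0 for at least one non-optimal x ∈ S_non. Then ρ(Q^μ) < ρ(Q¹); equivalently, the ρ-scalability (1 − ρ(Q^μ))/(1 − ρ(Q¹)) is strictly greater than 1, i.e. the average convergence rate of the (μ+μ) EA is strictly larger than that of the (1+1) EA. -/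
open Matrix

variable {S : Type*} [Fintype S] [LinearOrder S]

/-- `x` is an optimal individual for the fitness function `f`. -/
abbrev Sopt (f : S → ℝ) (x : S) : Prop := ∀ y, f y ≤ f x

/-- `x` is a non-optimal individual for the fitness function `f`. -/
abbrev Snon (f : S → ℝ) (x : S) : Prop := ¬ Sopt f x

/-- The transition matrix of the `(1+1)` elitist EA with mutation operator `M` and
fitness `f`: move to a strictly fitter mutant, otherwise stay put. -/
noncomputable def P1 (f : S → ℝ) (M : Matrix S S ℝ) : Matrix S S ℝ :=
  Matrix.of fun x z =>
    if f x < f z then M x z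
    else if z = x then ∑ y ∈ Finset.univ.filter (fun y => f y ≤ f x), M x y
    else 0

/-- The restriction `Q¹` of the `(1+1)` elitist EA transition matrix to the
non-optimal states. -/
noncomputable def Q1 (f : S → ℝ) (M : Matrix S S ℝ) :
    Matrix {x : S // Snon f x} {x : S // Snon f x} ℝ :=
  Matrix.of fun a b => P1 f M a.1 b.1

/-- The transition matrix `P^μ` of the `(μ+μ)` EA with mutation operator `M` and
selection operator `PS`: mutate each individual independently, then select. -/
noncomputable def Pmu {μ : ℕ} (M : Matrix S S ℝ)
    (PS : (Fin μ → S) → (Fin μ → S) → (Fin μ → S) → ℝ) :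
    Matrix (Fin μ → S) (Fin μ → S) ℝ :=
  Matrix.of fun X Z => ∑ Y : Fin μ → S, (∏ i, M (X i) (Y i)) * PS X Y Z

/-- The restriction `Q^μ` of the `(μ+μ)` EA transition matrix to the set `S^μ_non` of
populations containing no optimal individual. -/
noncomputable def Qmu {μ : ℕ} (f : S → ℝ) (M : Matrix S S ℝ)
    (PS : (Fin μ → S) → (Fin μ → S) → (Fin μ → S) → ℝ) :
    Matrix {X : Fin μ → S // ∀ i, Snon f (X i)} {X : Fin μ → S // ∀ i, Snon f (X i)} ℝ :=
  Matrix.of fun A B => Pmu M PS A.1 B.1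

/-! Order the non-optimal states by fitness: `Q¹` becomes triangular, so every staying
probability `P¹(x,x)` is an eigenvalue and `ρ(Q¹) ≥ p := max P¹(x,x)`. Order populations by the
fitness of their best individual: `Q^μ` becomes block triangular, and a population keeps that
fitness only if the mutant of its best individual is no fitter (probability `≤ p`) and the mutant
of another individual misses the optimum (probability `≤ c < 1` by globality). Weighting the
blocks geometrically turns this into a row-sum bound, `ρ(Q^μ) ≤ p c < p`. -/

open Finset

theorem Finset.prod_le_mul_of_ne {ι R : Type*} [Fintype ι] [DecidableEq ι] [CommSemiring R]
    [PartialOrder R] [IsOrderedRing R] {a : ι → R} (h0 : ∀ k, 0 ≤ a k) (h1 : ∀ k, a k ≤ 1)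
    {i j : ι} (hij : i ≠ j) : ∏ k, a k ≤ a i * a j := by
  rw [← prod_mul_prod_compl {i, j}, prod_pair hij]
  exact mul_le_of_le_one_right (mul_nonneg (h0 i) (h0 j))
    (prod_le_one (fun k _ => h0 k) fun k _ => h1 k)

namespace Matrix

variable {n : Type*} [Fintype n] [DecidableEq n]

theorem norm_le_of_mem_spectrum_of_weighted_rowSum_le {A : Matrix n n ℝ}
    (hA : ∀ i j, 0 ≤ A i j) {w : n → ℝ} (hw : ∀ i, 0 < w i) {θ : ℝ}
    (hrow : ∀ i, ∑ j, A i j * w j ≤ θ * w i) {z : ℂ}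
    (hz : z ∈ spectrum ℂ (A.map Complex.ofReal)) : ‖z‖ ≤ θ := by
  rw [← spectrum_toLin', ← Module.End.hasEigenvalue_iff_mem_spectrum] at hz
  obtain ⟨v, hv⟩ := hz.exists_hasEigenvector
  have heig : ∀ i, z * v i = ∑ j, A i j * v j := fun i => by
    simpa [mulVec, dotProduct] using (congrFun hv.apply_eq_smul i).symm
  obtain ⟨i₁, hi₁⟩ := Function.ne_iff.mp hv.2
  obtain ⟨i₀, -, hmax⟩ := exists_max_image univ (fun i => ‖v i‖ / w i) ⟨i₁, mem_univ _⟩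
  set t := ‖v i₀‖ / w i₀
  have hvt : ∀ j, ‖v j‖ ≤ t * w j := fun j => (div_le_iff₀ (hw j)).1 (hmax j (mem_univ j))
  have hti : t * w i₀ = ‖v i₀‖ := div_mul_cancel₀ _ (hw i₀).ne'
  have ht : 0 < t := pos_of_mul_pos_left ((norm_pos_iff.2 hi₁).trans_le (hvt i₁)) (hw i₁).le
  have hv₀ : 0 < ‖v i₀‖ := hti ▸ mul_pos ht (hw i₀)
  refine le_of_mul_le_mul_right ?_ hv₀
  calc ‖z‖ * ‖v i₀‖ = ‖∑ j, (A i₀ j : ℂ) * v j‖ := by rw [← norm_mul, heig]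
    _ ≤ ∑ j, A i₀ j * ‖v j‖ := by
        refine (norm_sum_le _ _).trans_eq (sum_congr rfl fun j _ => ?_)
        rw [norm_mul, Complex.norm_real, Real.norm_of_nonneg (hA i₀ j)]
    _ ≤ ∑ j, A i₀ j * (t * w j) := by gcongr with j; exact hA i₀ j; exact hvt j
    _ = t * ∑ j, A i₀ j * w j := by rw [mul_sum]; exact sum_congr rfl fun j _ => by ring
    _ ≤ t * (θ * w i₀) := mul_le_mul_of_nonneg_left (hrow i₀) ht.le
    _ = θ * ‖v i₀‖ := by rw [← hti]; ring

theorem specRad_le_of_blockTriangular {A : Matrix n n ℝ} {ℓ : n → ℕ}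
    (htri : A.BlockTriangular ℓ) (hA : ∀ i j, 0 ≤ A i j) (hrow : ∀ i, ∑ j, A i j ≤ 1)
    {q : ℝ} (hq : 0 ≤ q) (hdiag : ∀ i, ∑ j ∈ univ.filter (fun j => ℓ j = ℓ i), A i j ≤ q) :
    specRad A ≤ q := by
  refine Real.sSup_le ?_ hq
  rintro _ ⟨z, hz, rfl⟩
  refine le_of_forall_pos_le_add fun ε hε => ?_
  set δ := min ε 1
  have hδ : 0 < δ := lt_min hε one_pos
  -- weights `δ ^ ℓ i` make every block above the diagonal cost at least a factor `δ`
  have hterm : ∀ i j, A i j * δ ^ ℓ j ≤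
      (if ℓ j = ℓ i then A i j else 0) * δ ^ ℓ i + A i j * δ * δ ^ ℓ i := by
    intro i j
    rcases lt_trichotomy (ℓ j) (ℓ i) with hlt | heq | hgt
    · simp [htri hlt]
    · rw [heq, if_pos rfl]
      exact le_add_of_nonneg_right (mul_nonneg (mul_nonneg (hA i j) hδ.le) (pow_nonneg hδ.le _))
    · rw [if_neg hgt.ne', zero_mul, zero_add, mul_assoc, ← pow_succ']
      exact mul_le_mul_of_nonneg_left (pow_le_pow_of_le_one hδ.le (min_le_right _ _) hgt) (hA i j)
  have hrowδ : ∀ i, ∑ j, A i j * δ ^ ℓ j ≤ (q + δ) * δ ^ ℓ i := by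
    intro i
    calc ∑ j, A i j * δ ^ ℓ j
        ≤ (∑ j ∈ univ.filter (fun j => ℓ j = ℓ i), A i j) * δ ^ ℓ i
          + (∑ j, A i j) * δ * δ ^ ℓ i := by
          rw [sum_filter, sum_mul, sum_mul, sum_mul, ← sum_add_distrib]
          exact sum_le_sum fun j _ => hterm i j
      _ ≤ q * δ ^ ℓ i + 1 * δ * δ ^ ℓ i := by gcongr; exacts [hdiag i, hrow i]
      _ = (q + δ) * δ ^ ℓ i := by ring
  calc ‖z‖ ≤ q + δ :=
        norm_le_of_mem_spectrum_of_weighted_rowSum_le hA (fun i => pow_pos hδ _) hrowδ hz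
    _ ≤ q + ε := by gcongr; exact min_le_left _ _

theorem BlockTriangular.diag_mem_spectrum {K α : Type*} [Field K] [LinearOrder α]
    {M : Matrix n n K} {b : n → α} (h : M.BlockTriangular b) (hb : Function.Injective b)
    (i : n) : M i i ∈ spectrum K M := by
  let _ : LinearOrder n := LinearOrder.lift' b hb
  rw [mem_spectrum_iff_isRoot_charpoly, charpoly_of_isUpperTriangular M fun _ _ hlt => h hlt,
    Polynomial.IsRoot, Polynomial.eval_prod]
  exact prod_eq_zero (mem_univ i) (by simp)

theorem BlockTriangular.diag_le_specRad {α : Type*} [LinearOrder α] {A : Matrix n n ℝ}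
    {b : n → α} (h : A.BlockTriangular b) (hb : Function.Injective b) {i : n} (hi : 0 ≤ A i i) :
    A i i ≤ specRad A := by
  have hmem : ((A i i : ℝ) : ℂ) ∈ spectrum ℂ (A.map Complex.ofReal) :=
    (h.map Complex.ofRealHom).diag_mem_spectrum hb i
  calc A i i = ‖((A i i : ℝ) : ℂ)‖ := by rw [Complex.norm_real, Real.norm_of_nonneg hi]
    _ ≤ specRad A := le_csSup ((finite_spectrum _).image _).bddAbove ⟨_, hmem, rfl⟩

end Matrix

section Mutation

variable {α : Type*} [Fintype α] {f : α → ℝ} {M : Matrix α α ℝ}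

noncomputable def lowMass (f : α → ℝ) (M : Matrix α α ℝ) (x z : α) : ℝ :=
  ∑ y ∈ univ.filter (fun y => f y ≤ f x), M z y

theorem lowMass_nonneg (hM0 : ∀ x y, 0 ≤ M x y) (x z : α) : 0 ≤ lowMass f M x z :=
  sum_nonneg fun y _ => hM0 z y

theorem lowMass_le_one (hM0 : ∀ x y, 0 ≤ M x y) (hM1 : ∀ x, ∑ y, M x y = 1) (x z : α) :
    lowMass f M x z ≤ 1 :=
  hM1 z ▸ sum_le_sum_of_subset_of_nonneg (filter_subset _ _) fun y _ _ => hM0 z y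

theorem exists_lowMass_le (hM0 : ∀ x y, 0 ≤ M x y) (hM1 : ∀ x, ∑ y, M x y = 1)
    (hMglobal : ∀ x : α, 0 < ∑ y ∈ univ.filter (fun y => Sopt f y), M x y) [Nonempty α] :
    ∃ c, 0 ≤ c ∧ c < 1 ∧ ∀ x z, Snon f x → lowMass f M x z ≤ c := by
  obtain ⟨z₀, -, hz₀⟩ := exists_max_image univ
    (fun z => ∑ y ∈ univ.filter (fun y => ¬ Sopt f y), M z y) univ_nonempty
  refine ⟨∑ y ∈ univ.filter (fun y => ¬ Sopt f y), M z₀ y, sum_nonneg fun y _ => hM0 z₀ y, ?_,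
    fun x z hx => ?_⟩
  · linarith [sum_filter_add_sum_filter_not univ (Sopt f) (M z₀), hM1 z₀, hMglobal z₀]
  · refine le_trans (sum_le_sum_of_subset_of_nonneg ?_ fun y _ _ => hM0 z y) (hz₀ z (mem_univ z))
    intro y hy
    simp only [mem_filter, mem_univ, true_and] at hy ⊢
    exact fun hopt => hx fun w => (hopt w).trans hy

end Mutation

section OnePlusOne

variable {f : S → ℝ} {M : Matrix S S ℝ}

theorem P1_apply_self (x : S) : P1 f M x x = lowMass f M x x := by
  simp [P1, lowMass]

theorem Q1_blockTriangular : (Q1 f M).BlockTriangular fun a => toLex (f a.1, a.1) := by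
  intro a b hba
  have hne : b.1 ≠ a.1 := fun h => hba.ne (by rw [Subtype.ext h])
  have hfit : f b.1 ≤ f a.1 := Prod.Lex.monotone_fst _ _ hba.le
  simp [Q1, P1, hne, hfit.not_gt]

end OnePlusOne

noncomputable def fitnessRank {α : Type*} [Fintype α] (f : α → ℝ) (x : α) : ℕ :=
  #(univ.filter fun y => f y ≤ f x)

section Rank

variable {α : Type*} [Fintype α] {f : α → ℝ} {x y : α}

theorem fitnessRank_le_fitnessRank (h : f x ≤ f y) : fitnessRank f x ≤ fitnessRank f y :=
  card_le_card fun z hz => by simp only [mem_filter, mem_univ, true_and] at hz ⊢; exact hz.trans h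

theorem fitnessRank_lt_fitnessRank (h : f x < f y) : fitnessRank f x < fitnessRank f y := by
  refine card_lt_card ⟨fun z hz => ?_, fun hsub => ?_⟩
  · simp only [mem_filter, mem_univ, true_and] at hz ⊢; exact hz.trans h.le
  · have hy := hsub (by simp : y ∈ univ.filter fun z => f z ≤ f y)
    simp only [mem_filter, mem_univ, true_and] at hy
    exact hy.not_gt h

end Rank

section Population

variable {α : Type*} {f : α → ℝ} {μ : ℕ} {best : (Fin μ → α) → α}
  {PS : (Fin μ → α) → (Fin μ → α) → (Fin μ → α) → ℝ}

theorem fitness_best_eq_max_of_PS_pos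
    (hPS_elite : ∀ X Y Z, 0 < PS X Y Z →
      (f (best X) < f (best Y) → best Z = best Y) ∧
      (¬ f (best X) < f (best Y) → best Z = best X))
    {X Y Z : Fin μ → α} (h : 0 < PS X Y Z) :
    f (best Z) = max (f (best X)) (f (best Y)) := by
  by_cases hlt : f (best X) < f (best Y)
  · rw [(hPS_elite X Y Z h).1 hlt, max_eq_right hlt.le]
  · rw [(hPS_elite X Y Z h).2 hlt, max_eq_left (not_lt.1 hlt)]

variable [Fintype α] {M : Matrix α α ℝ}

theorem Pmu_nonneg (hM0 : ∀ x y, 0 ≤ M x y) (hPS0 : ∀ X Y Z, 0 ≤ PS X Y Z) (X Z : Fin μ → α) :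
    0 ≤ Pmu M PS X Z :=
  sum_nonneg fun Y _ => mul_nonneg (prod_nonneg fun _ _ => hM0 _ _) (hPS0 X Y Z)

theorem sum_Pmu_eq_one (hM1 : ∀ x, ∑ y, M x y = 1) (hPS1 : ∀ X Y, ∑ Z, PS X Y Z = 1)
    (X : Fin μ → α) : ∑ Z, Pmu M PS X Z = 1 := by
  simp only [Pmu, Matrix.of_apply]
  rw [sum_comm]
  simp_rw [← mul_sum, hPS1, mul_one, ← Fintype.prod_sum, hM1, prod_const_one]

theorem sum_Qmu_le_one (hM0 : ∀ x y, 0 ≤ M x y) (hM1 : ∀ x, ∑ y, M x y = 1)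
    (hPS0 : ∀ X Y Z, 0 ≤ PS X Y Z) (hPS1 : ∀ X Y, ∑ Z, PS X Y Z = 1)
    (X : {X : Fin μ → α // ∀ i, Snon f (X i)}) : ∑ Z, Qmu f M PS X Z ≤ 1 := by
  classical
  rw [← sum_Pmu_eq_one hM1 hPS1 X.1,
    ← Fintype.sum_subtype_add_sum_subtype fun X : Fin μ → α => ∀ i, Snon f (X i)]
  exact le_add_of_nonneg_right (sum_nonneg fun Z _ => Pmu_nonneg hM0 hPS0 _ _)

theorem Qmu_blockTriangular (hPS0 : ∀ X Y Z, 0 ≤ PS X Y Z)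
    (hPS_max : ∀ X Y Z, 0 < PS X Y Z → f (best Z) = max (f (best X)) (f (best Y))) :
    (Qmu f M PS).BlockTriangular fun X => fitnessRank f (best X.1) := by
  intro X Z hZX
  by_contra hne
  obtain ⟨Y, -, hY⟩ := exists_ne_zero_of_sum_ne_zero hne
  have hPS : 0 < PS X.1 Y Z.1 := (hPS0 _ _ _).lt_of_ne' (right_ne_zero_of_mul hY)
  have hfit : f (best X.1) ≤ f (best Z.1) := (hPS_max _ _ _ hPS).symm ▸ le_max_left _ _
  exact (fitnessRank_le_fitnessRank hfit).not_gt hZX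

theorem sum_Qmu_sameRank_le (hM0 : ∀ x y, 0 ≤ M x y) (hPS0 : ∀ X Y Z, 0 ≤ PS X Y Z)
    (hPS1 : ∀ X Y, ∑ Z, PS X Y Z = 1)
    (hPS_max : ∀ X Y Z, 0 < PS X Y Z → f (best Z) = max (f (best X)) (f (best Y)))
    (hbest_max : ∀ X i, f (X i) ≤ f (best X)) (X : {X : Fin μ → α // ∀ i, Snon f (X i)}) :
    ∑ Z ∈ univ.filter (fun Z => fitnessRank f (best Z.1) = fitnessRank f (best X.1)),
      Qmu f M PS X Z ≤ ∏ i, lowMass f M (best X.1) (X.1 i) := by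
  classical
  set x := best X.1
  set sameRank := univ.filter fun Z : {X : Fin μ → α // ∀ i, Snon f (X i)} =>
    fitnessRank f (best Z.1) = fitnessRank f x
  -- selection keeps the rank only if no mutant beats `x`
  have hkeep : ∀ Y, ∑ Z ∈ sameRank, PS X.1 Y Z.1 ≤ if f (best Y) ≤ f x then 1 else 0 := by
    intro Y
    split_ifs with hY
    · rw [← hPS1 X.1 Y,
        ← Fintype.sum_subtype_add_sum_subtype fun X : Fin μ → α => ∀ i, Snon f (X i)]
      exact le_add_of_le_of_nonneg
        (sum_le_sum_of_subset_of_nonneg (filter_subset _ _) fun _ _ _ => hPS0 _ _ _)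
        (sum_nonneg fun _ _ => hPS0 _ _ _)
    · refine (sum_eq_zero fun Z hZ => ?_).le
      by_contra hne
      have hpos := (hPS0 X.1 Y Z.1).lt_of_ne' hne
      have hfit := hPS_max _ _ _ hpos
      rw [max_eq_right (not_le.1 hY).le] at hfit
      exact (fitnessRank_lt_fitnessRank (hfit ▸ not_le.1 hY)).ne' (mem_filter.1 hZ).2
  calc ∑ Z ∈ sameRank, Qmu f M PS X Z
      = ∑ Y, (∏ i, M (X.1 i) (Y i)) * ∑ Z ∈ sameRank, PS X.1 Y Z.1 := by
        simp only [Qmu, Pmu, Matrix.of_apply, mul_sum]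
        exact sum_comm
    _ ≤ ∑ Y ∈ univ.filter (fun Y => f (best Y) ≤ f x), ∏ i, M (X.1 i) (Y i) := by
        rw [sum_filter]
        refine sum_le_sum fun Y _ => ?_
        refine (mul_le_mul_of_nonneg_left (hkeep Y) (prod_nonneg fun i _ => hM0 _ _)).trans_eq ?_
        rw [mul_ite, mul_one, mul_zero]
    _ ≤ ∑ Y ∈ Fintype.piFinset (fun _ => univ.filter (fun y => f y ≤ f x)),
          ∏ i, M (X.1 i) (Y i) := by
        refine sum_le_sum_of_subset_of_nonneg (fun Y hY => ?_)
          fun Y _ _ => prod_nonneg fun i _ => hM0 (X.1 i) (Y i)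
        simp only [mem_filter, mem_univ, true_and, Fintype.mem_piFinset] at hY ⊢
        exact fun i => (hbest_max Y i).trans hY
    _ = ∏ i, lowMass f M x (X.1 i) := (prod_univ_sum _ _).symm

theorem specRad_Qmu_le [DecidableEq α] (hM0 : ∀ x y, 0 ≤ M x y) (hM1 : ∀ x, ∑ y, M x y = 1)
    (hμ : 2 ≤ μ) (hbest_mem : ∀ X, ∃ i, best X = X i)
    (hbest_max : ∀ X i, f (X i) ≤ f (best X)) (hPS0 : ∀ X Y Z, 0 ≤ PS X Y Z)
    (hPS1 : ∀ X Y, ∑ Z, PS X Y Z = 1)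
    (hPS_max : ∀ X Y Z, 0 < PS X Y Z → f (best Z) = max (f (best X)) (f (best Y)))
    {p c : ℝ} (hp0 : 0 ≤ p) (hc0 : 0 ≤ c) (hp : ∀ x, Snon f x → lowMass f M x x ≤ p)
    (hc : ∀ x z, Snon f x → lowMass f M x z ≤ c) :
    specRad (Qmu f M PS) ≤ p * c := by
  refine Matrix.specRad_le_of_blockTriangular (Qmu_blockTriangular hPS0 hPS_max)
    (fun X Z => Pmu_nonneg hM0 hPS0 X.1 Z.1) (sum_Qmu_le_one hM0 hM1 hPS0 hPS1)
    (mul_nonneg hp0 hc0) fun X => (sum_Qmu_sameRank_le hM0 hPS0 hPS1 hPS_max hbest_max X).trans ?_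
  obtain ⟨j, hj⟩ := hbest_mem X.1
  have hx : Snon f (best X.1) := hj ▸ X.2 j
  obtain ⟨i, hij⟩ := Fintype.exists_ne_of_one_lt_card (by rwa [Fintype.card_fin]) j
  -- the best individual's mutant is no fitter than it with probability `≤ p`, a second one's `≤ c`
  calc ∏ k, lowMass f M (best X.1) (X.1 k)
      ≤ lowMass f M (best X.1) (X.1 j) * lowMass f M (best X.1) (X.1 i) :=
        prod_le_mul_of_ne (fun _ => lowMass_nonneg hM0 _ _) (fun _ => lowMass_le_one hM0 hM1 _ _)
          hij.symm
    _ ≤ p * c := mul_le_mul (hj ▸ hp _ hx) (hc _ _ hx) (lowMass_nonneg hM0 _ _) hp0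

end Population

theorem stmt_8_general (f : S → ℝ) (M : Matrix S S ℝ)
    (hM0 : ∀ x y, 0 ≤ M x y) (hM1 : ∀ x, ∑ y, M x y = 1)
    (hMglobal : ∀ x : S, 0 < ∑ y ∈ Finset.univ.filter (fun y => Sopt f y), M x y)
    (μ : ℕ) (hμ : 2 ≤ μ)
    (best : (Fin μ → S) → S)
    (hbest_mem : ∀ X, ∃ i, best X = X i)
    (hbest_max : ∀ X i, f (X i) ≤ f (best X))
    (PS : (Fin μ → S) → (Fin μ → S) → (Fin μ → S) → ℝ)
    (hPS0 : ∀ X Y Z, 0 ≤ PS X Y Z)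
    (hPS1 : ∀ X Y, ∑ Z : Fin μ → S, PS X Y Z = 1)
    (hPS_elite : ∀ X Y Z, 0 < PS X Y Z →
      (f (best X) < f (best Y) → best Z = best Y) ∧
      (¬ f (best X) < f (best Y) → best Z = best X))
    (hself : ∃ x : S, Snon f x ∧ 0 < P1 f M x x) :
    specRad (Qmu f M PS) < specRad (Q1 f M) := by
  obtain ⟨x₀, hx₀, hstay⟩ := hself
  rw [P1_apply_self] at hstay
  have : Nonempty S := ⟨x₀⟩
  obtain ⟨c, hc0, hc1, hc⟩ := exists_lowMass_le hM0 hM1 hMglobal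
  obtain ⟨xs, -, hxs⟩ := exists_max_image univ (fun a : {x // Snon f x} => lowMass f M a a)
    ⟨⟨x₀, hx₀⟩, mem_univ _⟩
  have hpos : 0 < lowMass f M xs xs := hstay.trans_le (hxs ⟨x₀, hx₀⟩ (mem_univ _))
  calc specRad (Qmu f M PS)
      ≤ lowMass f M xs xs * c :=
        specRad_Qmu_le hM0 hM1 hμ hbest_mem hbest_max hPS0 hPS1
          (fun _ _ _ => fitness_best_eq_max_of_PS_pos hPS_elite) hpos.le hc0
          (fun x hx => hxs ⟨x, hx⟩ (mem_univ _)) hc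
    _ < lowMass f M xs xs := mul_lt_of_lt_one_right hpos hc1
    _ = Q1 f M xs xs := (P1_apply_self _).symm
    _ ≤ specRad (Q1 f M) :=
        Q1_blockTriangular.diag_le_specRad (fun a b h => Subtype.ext (congrArg (·.2) h))
          (hpos.trans_eq (P1_apply_self _).symm).le

/-- for a `(1+1)` elitist EA and a `(μ+μ)` elitist EA (`μ ≥ 2`) with the
same global mutation operator `M` on the same fitness function `f`, if `S_non ≠ ∅` and
some non-optimal state has positive self-transition probability, then
`ρ(Q^μ) < ρ(Q¹)`: the average convergence rate of the `(μ+μ)` EA is strictly larger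
than that of the `(1+1)` EA (`ρ`-scalability `> 1`).

Here `best` is the best-individual map (entry of maximal fitness, ties broken by the
linear order on `S`) and `PS` is an elitist selection operator. -/
theorem stmt_8 (f : S → ℝ) (M : Matrix S S ℝ)
    (hM0 : ∀ x y, 0 ≤ M x y) (hM1 : ∀ x, ∑ y, M x y = 1)
    (hMglobal : ∀ x : S, 0 < ∑ y ∈ Finset.univ.filter (fun y => Sopt f y), M x y)
    (μ : ℕ) (hμ : 2 ≤ μ)
    (best : (Fin μ → S) → S)
    (hbest_mem : ∀ X, ∃ i, best X = X i)
    (hbest_max : ∀ X i, f (X i) ≤ f (best X))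
    (hbest_tie : ∀ X i, f (X i) = f (best X) → X i ≤ best X)
    (PS : (Fin μ → S) → (Fin μ → S) → (Fin μ → S) → ℝ)
    (hPS0 : ∀ X Y Z, 0 ≤ PS X Y Z)
    (hPS1 : ∀ X Y, ∑ Z : Fin μ → S, PS X Y Z = 1)
    (hPS_src : ∀ X Y Z, 0 < PS X Y Z → ∀ i, (∃ j, Z i = X j) ∨ (∃ j, Z i = Y j))
    (hPS_elite : ∀ X Y Z, 0 < PS X Y Z →
      (f (best X) < f (best Y) → best Z = best Y) ∧
      (¬ f (best X) < f (best Y) → best Z = best X))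
    (hSnon : ∃ x : S, Snon f x)
    (hself : ∃ x : S, Snon f x ∧ 0 < P1 f M x x) :
    specRad (Qmu f M PS) < specRad (Q1 f M) :=
  stmt_8_general f M hM0 hM1 hMglobal μ hμ best hbest_mem hbest_max PS hPS0 hPS1 hPS_elite hself
end

section
/- Let Q¹ and Q^μ be nonnegative real square matrices (of possibly different sizes, both nonempty) representing the transient transition submatrices of a (1+1) EA and of a (μ+μ) EA (μ ≥ 2) respectively, and assume 0 < 1 − μ(1 − ρ(Q¹)). Then superlinear ρ-scalability holds, i.e. 1 − ρ(Q^μ) > μ(1 − ρ(Q¹)), if and only if there exists an integer k ≥ 1 such that for every index X, the X-th row sum of (Q^μ)^k satisfies ∑_Y ((Q^μ)^k)(X,Y) < (1 − μ(1 − ρ(Q¹)))^k; equivalently, the probability of reaching the optimal set within k generations from every non-optimal state X exceeds 1 − (1 − μ(1 − ρ(Q¹)))^k. -/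
open Matrix

/-!
For a nonnegative matrix, the row sums of `Q ^ k` are the rows of `|Q ^ k|`, so their maximum is
the ℓ∞ operator norm `‖Q ^ k‖`. By Gelfand's formula `‖Q ^ k‖ ^ (1 / k) → ρ(Q)`, hence for `r > 0`
we have `ρ(Q) < r` iff `‖Q ^ k‖ < r ^ k` for some `k ≥ 1`; the converse direction is the bound
`|z| ^ k ≤ ‖Q ^ k‖` for every eigenvalue `z`. Taking `r = 1 - μ(1 - ρ(Q¹))`, the inequality
`ρ(Qμ) < r` is superlinear ρ-scalability.
-/

namespace spectrum

variable {A : Type*} [NormedRing A] [NormedAlgebra ℂ A] [CompleteSpace A] [NormOneClass A]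

theorem norm_lt_of_norm_pow_lt_pow {a : A} {z : ℂ} (hz : z ∈ spectrum ℂ a) {r : ℝ} (hr : 0 ≤ r)
    {k : ℕ} (hk : ‖a ^ k‖ < r ^ k) : ‖z‖ < r := by
  refine lt_of_pow_lt_pow_left₀ k hr ?_
  calc ‖z‖ ^ k = ‖z ^ k‖ := (norm_pow z k).symm
    _ ≤ ‖a ^ k‖ := norm_le_norm_of_mem (pow_mem_pow a k hz)
    _ < r ^ k := hk

theorem exists_norm_pow_lt_pow_of_forall_norm_lt {a : A} {r : ℝ} (hr : 0 < r)
    (h : ∀ z ∈ spectrum ℂ a, ‖z‖ < r) : ∃ k, 1 ≤ k ∧ ‖a ^ k‖ < r ^ k := by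
  have := NormOneClass.nontrivial (G := A)
  have hρ : spectralRadius ℂ a < ENNReal.ofReal r :=
    spectralRadius_lt_of_forall_lt a fun z hz => by
      rw [← NNReal.coe_lt_coe, coe_nnnorm, Real.coe_toNNReal _ hr.le]
      exact h z hz
  obtain ⟨k, hk, hk1⟩ := ((pow_norm_pow_one_div_tendsto_nhds_spectralRadius a).eventually_lt_const
    hρ |>.and (Filter.eventually_ge_atTop 1)).exists
  refine ⟨k, hk1, ?_⟩
  rw [ENNReal.ofReal_lt_ofReal_iff hr, one_div] at hk
  calc ‖a ^ k‖ = (‖a ^ k‖ ^ (k⁻¹ : ℝ)) ^ k :=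
        (Real.rpow_inv_natCast_pow (norm_nonneg _) (by omega)).symm
    _ < r ^ k := pow_lt_pow_left₀ hk (by positivity) (by omega)

theorem forall_norm_lt_iff_exists_norm_pow_lt {a : A} {r : ℝ} (hr : 0 < r) :
    (∀ z ∈ spectrum ℂ a, ‖z‖ < r) ↔ ∃ k, 1 ≤ k ∧ ‖a ^ k‖ < r ^ k :=
  ⟨exists_norm_pow_lt_pow_of_forall_norm_lt hr,
    fun ⟨_, _, hk⟩ _ hz => norm_lt_of_norm_pow_lt_pow hz hr.le hk⟩

end spectrum

section Matrix

attribute [local instance] Matrix.linftyOpNormedAddCommGroup Matrix.linftyOpNormedRing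
  Matrix.linftyOpNormedAlgebra

variable {ι κ : Type*} [Fintype ι] [Fintype κ]

theorem Matrix.linfty_opNorm_map_ofReal_lt_iff {B : Matrix ι κ ℝ} (hB : ∀ i j, 0 ≤ B i j)
    {s : ℝ} (hs : 0 < s) : ‖B.map ((↑) : ℝ → ℂ)‖ < s ↔ ∀ i, ∑ j, B i j < s := by
  rw [linfty_opNorm_def, ← Real.lt_toNNReal_iff_coe_lt,
    Finset.sup_lt_iff (bot_lt_iff_ne_bot.mpr (Real.toNNReal_pos.mpr hs).ne')]
  refine forall_congr' fun i => ?_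
  simp only [Finset.mem_univ, true_implies, Real.lt_toNNReal_iff_coe_lt, NNReal.coe_sum,
    coe_nnnorm, map_apply, Complex.norm_real, Real.norm_of_nonneg (hB i _)]

variable [DecidableEq ι]

theorem specRad_lt_iff_forall_norm_lt (Q : Matrix ι ι ℝ) {r : ℝ} (hr : 0 < r) :
    specRad Q < r ↔ ∀ z ∈ spectrum ℂ (Q.map ((↑) : ℝ → ℂ)), ‖z‖ < r := by
  rcases (spectrum ℂ (Q.map ((↑) : ℝ → ℂ))).eq_empty_or_nonempty with h | h
  · simp [specRad, h, hr]
  · exact (spectrum.isCompact _).sSup_lt_iff_of_continuous h continuous_norm.continuousOn r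

end Matrix

theorem specRad_lt_iff_exists_rowSum_pow_lt {ι : Type*} [Fintype ι] [DecidableEq ι]
    {Q : Matrix ι ι ℝ} (hQ : ∀ i j, 0 ≤ Q i j) {r : ℝ} (hr : 0 < r) :
    specRad Q < r ↔ ∃ k, 1 ≤ k ∧ ∀ i, ∑ j, (Q ^ k) i j < r ^ k := by
  -- The ℓ∞ norm is installed on complex matrices only: as local instances for all matrices it
  -- would also give the real `Q ^ k` a monoid structure that is not reducibly the usual one.
  let : NormedRing (Matrix ι ι ℂ) := Matrix.linftyOpNormedRing
  let : NormedAlgebra ℂ (Matrix ι ι ℂ) := Matrix.linftyOpNormedAlgebra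
  rw [specRad_lt_iff_forall_norm_lt Q hr]
  cases isEmpty_or_nonempty ι
  · exact iff_of_true (by simp [spectrum.of_subsingleton]) ⟨1, le_rfl, isEmptyElim⟩
  rw [spectrum.forall_norm_lt_iff_exists_norm_pow_lt hr]
  refine exists_congr fun k => and_congr_right fun _ => ?_
  rw [show Q.map ((↑) : ℝ → ℂ) ^ k = (Q ^ k).map (↑) from (Q.map_pow Complex.ofRealHom k).symm,
    Matrix.linfty_opNorm_map_ofReal_lt_iff (pow_apply_nonneg hQ k) (pow_pos hr k)]

theorem stmt_9_general (n m μ : ℕ)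
    (Q1 : Matrix (Fin n) (Fin n) ℝ)
    (Qmu : Matrix (Fin m) (Fin m) ℝ) (hQmu : ∀ i j, 0 ≤ Qmu i j)
    (hpos : 0 < 1 - (μ : ℝ) * (1 - specRad Q1)) :
    (1 - specRad Qmu > (μ : ℝ) * (1 - specRad Q1)) ↔
      ∃ k : ℕ, 1 ≤ k ∧ ∀ X : Fin m,
        ∑ Y, (Qmu ^ k) X Y < (1 - (μ : ℝ) * (1 - specRad Q1)) ^ k := by
  rw [← specRad_lt_iff_exists_rowSum_pow_lt hQmu hpos]
  constructor <;> intro h <;> linarith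

/-- let `Q¹` and `Qμ` be nonnegative transient transition submatrices of a
`(1+1)` EA and of a `(μ+μ)` EA (`μ ≥ 2`), with `0 < 1 - μ(1 - ρ(Q¹))`.  Superlinear
ρ-scalability `1 - ρ(Qμ) > μ(1 - ρ(Q¹))` holds if and only if there is some `k ≥ 1`
such that every row sum of `Qμ^k` (the probability of staying non-optimal for `k`
generations) is less than `(1 - μ(1 - ρ(Q¹)))^k`. -/
theorem stmt_9 (n m μ : ℕ) (hn : 1 ≤ n) (hm : 1 ≤ m) (hμ : 2 ≤ μ)
    (Q1 : Matrix (Fin n) (Fin n) ℝ) (hQ1 : ∀ i j, 0 ≤ Q1 i j)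
    (Qmu : Matrix (Fin m) (Fin m) ℝ) (hQmu : ∀ i j, 0 ≤ Qmu i j)
    (hpos : 0 < 1 - (μ : ℝ) * (1 - specRad Q1)) :
    (1 - specRad Qmu > (μ : ℝ) * (1 - specRad Q1)) ↔
      ∃ k : ℕ, 1 ≤ k ∧ ∀ X : Fin m,
        ∑ Y, (Qmu ^ k) X Y < (1 - (μ : ℝ) * (1 - specRad Q1)) ^ k :=
  stmt_9_general n m μ Q1 Qmu hQmu hpos
end
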